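/- For all positive integers p, q, m, n and every ψ ∈ K(p,q), the composition of the fold monomorphism followed by the dual epimorphism is multiplication by mn: π(ι(ψ)) = (m·n)·ψ. In other words, the composite G(p,q) ↪ G(mp,nq) ↠ G(p,q) is the identity homomorphism multiplied by mn. -/
import Mathlib


open scoped BigOperators

/-- `v` lies in the open rectangle `Γ(p,q) = (0,p) × (0,q) ∩ ℤ²`. -/
def InRect (p q : ℤ) (v : ℤ × ℤ) : Prop :=
  0 < v.1 ∧ v.1 < p ∧ 0 < v.2 ∧ v.2 < q

/-- `ψ : ℤ² → ℝ/ℤ` belongs to `K(p,q)`, the realization of the sandpile group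
`G(p,q)`: it vanishes outside `Γ(p,q)` and satisfies
`4·ψ(v) = Σ_{|w−v|=1} ψ(w)` for all `v ∈ Γ(p,q)`. -/
def IsK (p q : ℤ) (ψ : ℤ × ℤ → AddCircle (1 : ℝ)) : Prop :=
  (∀ v, ¬ InRect p q v → ψ v = 0) ∧
  ∀ v, InRect p q v → (4 : ℤ) • ψ v =
    ψ (v.1 + 1, v.2) + ψ (v.1 - 1, v.2) + ψ (v.1, v.2 + 1) + ψ (v.1, v.2 - 1)

/-- `σ_p(x) = x − kp` if `k = ⌊x/p⌋` is even and `(k+1)p − x` if `k` is odd. -/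
def sigmaFold (p x : ℤ) : ℤ :=
  if Even (x / p) then x - x / p * p else (x / p + 1) * p - x

open Classical in
/-- The fold map `ι : K(p,q) → K(P,Q)` (with `P = mp`, `Q = nq`):
`ι(ψ)(x,y) = (−1)^{⌊x/p⌋+⌊y/q⌋} ψ(σ_p(x), σ_q(y))` on `Γ(P,Q)` and `0` outside. -/
noncomputable def foldMap (p q P Q : ℤ) (ψ : ℤ × ℤ → AddCircle (1 : ℝ)) :
    ℤ × ℤ → AddCircle (1 : ℝ) :=
  fun v => if InRect P Q v then
      ((if Even (v.1 / p + v.2 / q) then (1 : ℤ) else -1)) •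
        ψ (sigmaFold p v.1, sigmaFold q v.2)
    else 0

/-- `μ_{p,k}(x) = kp + x` if `k` is even and `(k+1)p − x` if `k` is odd. -/
def muFold (p k x : ℤ) : ℤ := if Even k then k * p + x else (k + 1) * p - x

open Classical in
/-- The dual map `π : K(mp,nq) → K(p,q)`:
`π(ψ)(x,y) = Σ_{k<m} Σ_{l<n} (−1)^{k+l} ψ(μ_{p,k}(x), μ_{q,l}(y))` on `Γ(p,q)`
and `0` outside. -/
noncomputable def dualMap (p q : ℤ) (m n : ℕ) (ψ : ℤ × ℤ → AddCircle (1 : ℝ)) :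
    ℤ × ℤ → AddCircle (1 : ℝ) :=
  fun v => if InRect p q v then
      ∑ k ∈ Finset.range m, ∑ l ∈ Finset.range n,
        ((-1 : ℤ) ^ (k + l)) • ψ (muFold p k v.1, muFold q l v.2)
    else 0

lemma muFold_bounds (p x k : ℤ) (hx : 0 < x) (hxp : x < p) :
    k * p < muFold p k x ∧ muFold p k x < (k + 1) * p := by
  unfold muFold
  split <;> constructor <;> nlinarith

lemma muFold_div (p x k : ℤ) (hp : 0 < p) (hx : 0 < x) (hxp : x < p) :
    muFold p k x / p = k := by
  unfold muFold
  split
  · rw [show k * p + x = x + p * k by ring, Int.add_mul_ediv_left x k hp.ne',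
      Int.ediv_eq_zero_of_lt hx.le hxp, zero_add]
  · rw [show (k + 1) * p - x = (p - x) + p * k by ring,
      Int.add_mul_ediv_left _ k hp.ne',
      Int.ediv_eq_zero_of_lt (by linarith) (by linarith), zero_add]

lemma sigmaFold_muFold (p x k : ℤ) (hp : 0 < p) (hx : 0 < x) (hxp : x < p) :
    sigmaFold p (muFold p k x) = x := by
  unfold sigmaFold
  rw [muFold_div p x k hp hx hxp]
  by_cases hk : Even k <;> simp only [muFold, hk, if_true, if_false] <;> ring

/-- The composite `G(p,q) ↪ G(mp,nq) ↠ G(p,q)` of the fold monomorphism and the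
dual epimorphism is multiplication by `mn`: `π(ι(ψ)) = (m·n)·ψ`. -/
theorem dualMap_comp_foldMap_eq_mul (p q m n : ℕ)
    (hp : 0 < p) (hq : 0 < q) (hm : 0 < m) (hn : 0 < n) :
    ∀ ψ, IsK p q ψ →
      dualMap p q m n (foldMap p q ((m : ℤ) * p) ((n : ℤ) * q) ψ) =
        ((m : ℤ) * n) • ψ := by
  intro ψ hψ
  funext v
  by_cases hv : InRect p q v
  · obtain ⟨hx0, hxp, hy0, hyq⟩ := hv
    rw [dualMap, if_pos ⟨hx0, hxp, hy0, hyq⟩]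
    have hterm : ∀ k ∈ Finset.range m, ∀ l ∈ Finset.range n,
        ((-1 : ℤ) ^ (k + l)) •
          foldMap p q ((m : ℤ) * p) ((n : ℤ) * q) ψ
            (muFold p (k : ℤ) v.1, muFold q (l : ℤ) v.2) = ψ v := by
      intro k hk l hl
      have hk' : (k : ℤ) + 1 ≤ m := by exact_mod_cast Finset.mem_range.mp hk
      have hl' : (l : ℤ) + 1 ≤ n := by exact_mod_cast Finset.mem_range.mp hl
      have hpz : (0 : ℤ) < p := by exact_mod_cast hp
      have hqz : (0 : ℤ) < q := by exact_mod_cast hq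
      obtain ⟨hb1, hb2⟩ := muFold_bounds p v.1 k hx0 hxp
      obtain ⟨hc1, hc2⟩ := muFold_bounds q v.2 l hy0 hyq
      have hin : InRect ((m : ℤ) * p) ((n : ℤ) * q)
          (muFold p (k : ℤ) v.1, muFold q (l : ℤ) v.2) := by
        refine ⟨?_, ?_, ?_, ?_⟩
        · have : (0 : ℤ) ≤ (k : ℤ) * p := by positivity
          exact lt_of_le_of_lt this hb1
        · exact lt_of_lt_of_le hb2 (by nlinarith)
        · have : (0 : ℤ) ≤ (l : ℤ) * q := by positivity
          exact lt_of_le_of_lt this hc1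
        · exact lt_of_lt_of_le hc2 (by nlinarith)
      rw [foldMap]
      simp only [if_pos hin]
      rw [muFold_div p v.1 k hpz hx0 hxp, muFold_div q v.2 l hqz hy0 hyq,
        sigmaFold_muFold p v.1 k hpz hx0 hxp, sigmaFold_muFold q v.2 l hqz hy0 hyq]
      have hsign : (if Even ((k : ℤ) + l) then (1 : ℤ) else -1) = (-1 : ℤ) ^ (k + l) := by
        by_cases h : Even (k + l)
        · rw [if_pos (by exact_mod_cast h), h.neg_one_pow]
        · rw [if_neg (fun hc => h (by exact_mod_cast hc)),
            (Nat.not_even_iff_odd.mp h).neg_one_pow]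
      rw [hsign, smul_smul, ← pow_add,
        Even.neg_one_pow ⟨k + l, by ring⟩, one_smul]
    rw [Finset.sum_congr rfl fun k hk => Finset.sum_congr rfl fun l hl => hterm k hk l hl]
    simp only [Finset.sum_const, Finset.card_range, smul_smul]
    rw [show ((m : ℤ) * n) = ((m * n : ℕ) : ℤ) by push_cast; ring, natCast_zsmul]
    rfl
  · have h0 : ψ v = 0 := hψ.1 v hv
    rw [dualMap]
    simp [if_neg hv, h0]
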